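/- arXiv:2406.19830 — 6 statements merged into one kernel-verified Lean document; each statement's English description precedes it below -/
import Mathlib

section
/- Let k ≥ 1 and y_1, ..., y_k be real numbers such that (y_1 - 4)^2 ≤ 1 and (y_{i+1} - y_i^2)^2 ≤ 1 for all 1 ≤ i ≤ k-1. Then y_i ≥ 2^(2^(i-1)) + 1 for all i in {1, ..., k}. -/
lemma sq_le_one_lb (a b : ℝ) (h : (a - b) ^ 2 ≤ 1) : b - 1 ≤ a := by
  nlinarith [sq_nonneg (a - b)]

/-- Tower-of-exponentials induction: from `(y₁-4)² ≤ 1` and `(y_{i+1}-y_i²)² ≤ 1`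
we get `y_i ≥ 2^(2^(i-1)) + 1` for all `1 ≤ i ≤ k`. -/
theorem stmt0 (k : ℕ) (hk : 1 ≤ k) (y : ℕ → ℝ)
    (h1 : (y 1 - 4) ^ 2 ≤ 1)
    (h2 : ∀ i, 1 ≤ i → i ≤ k - 1 → (y (i + 1) - (y i) ^ 2) ^ 2 ≤ 1) :
    ∀ i, 1 ≤ i → i ≤ k → y i ≥ (2 : ℝ) ^ (2 ^ (i - 1)) + 1 := by
  intro i
  induction i with
  | zero => intro h; omega
  | succ n ih =>
    intro _ hnk
    rcases Nat.eq_zero_or_pos n with hn0 | hn1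
    · subst hn0
      have := sq_le_one_lb _ _ h1
      norm_num
      linarith
    · have hprev : y n ≥ (2 : ℝ) ^ (2 ^ (n - 1)) + 1 := ih hn1 (by omega)
      have hstep := sq_le_one_lb _ _ (h2 n hn1 (by omega))
      have he : (2 : ℝ) ^ (2 ^ (n - 1)) ≥ 2 := by
        calc (2 : ℝ) ^ (2 ^ (n - 1)) ≥ 2 ^ 1 := by
              apply pow_le_pow_right₀ (by norm_num) (Nat.one_le_two_pow)
          _ = 2 := pow_one 2
      have key : (y n) ^ 2 - 1 ≥ (2 : ℝ) ^ (2 ^ n) + 1 := by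
        have h2n : (2 : ℝ) ^ (2 ^ n) = ((2 : ℝ) ^ (2 ^ (n - 1))) ^ 2 := by
          rw [← pow_mul]
          congr 1
          rw [← pow_succ]
          congr 1
          omega
        nlinarith [sq_nonneg (y n - ((2 : ℝ) ^ (2 ^ (n - 1)) + 1))]
      have : n + 1 - 1 = n := by omega
      rw [this]
      linarith
end

section
/- Let S be a countable set, μ, ν ∈ Distr(S) probability distributions on S, and ω a coupling of μ and ν (a distribution on S × S with marginals μ and ν). Let R ⊆ S × S be an equivalence relation such that support(ω) ⊆ R. Then for every R-equivalence class E, μ(E) = ν(E). -/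
/-- If a coupling of `μ` and `ν` is supported on an equivalence relation, then
both marginals assign equal mass to each equivalence class. -/
theorem stmt4 {S : Type*} [Countable S] (μ ν : PMF S) (ω : PMF (S × S))
    (hleft : ∀ s, (∑' t, ω (s, t)) = μ s)
    (hright : ∀ t, (∑' s, ω (s, t)) = ν t)
    (r : S → S → Prop) (hr : Equivalence r)
    (hsupp : ∀ p : S × S, p ∈ ω.support → r p.1 p.2) :
    ∀ s₀ : S, (∑' t : {t // r s₀ t}, μ t) = ∑' t : {t // r s₀ t}, ν t := by
  classical
  intro s₀
  have key : ∀ p : S × S, (if r s₀ p.1 then ω p else 0) = (if r s₀ p.2 then ω p else 0) := by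
    intro p
    by_cases h : ω p = 0
    · simp [h]
    · have hrp := hsupp p (by simpa [PMF.mem_support_iff] using h)
      by_cases h1 : r s₀ p.1
      · rw [if_pos h1, if_pos (hr.trans h1 hrp)]
      · rw [if_neg h1, if_neg (fun h2 => h1 (hr.trans h2 (hr.symm hrp)))]
  calc (∑' t : {t // r s₀ t}, μ t)
      = ∑' s, if r s₀ s then μ s else 0 := by
        rw [show (∑' t : {t // r s₀ t}, μ t) = ∑' x : ({t | r s₀ t} : Set S), μ x from rfl,
          tsum_subtype {t | r s₀ t} (fun t => μ t)]
        exact tsum_congr fun s => by simp [Set.indicator_apply]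
    _ = ∑' s, ∑' t, if r s₀ s then ω (s, t) else 0 := by
        refine tsum_congr fun s => ?_
        by_cases h : r s₀ s <;> simp [h, hleft s]
    _ = ∑' p : S × S, if r s₀ p.1 then ω p else 0 := by
        exact (ENNReal.tsum_prod (f := fun a b => if r s₀ a then ω (a, b) else 0)).symm
    _ = ∑' p : S × S, if r s₀ p.2 then ω p else 0 := tsum_congr key
    _ = ∑' t, ∑' s, if r s₀ t then ω (s, t) else 0 := by
        exact (ENNReal.tsum_prod (f := fun a b => if r s₀ b then ω (a, b) else 0)).trans
          ENNReal.tsum_comm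
    _ = ∑' t, if r s₀ t then ν t else 0 := by
        refine tsum_congr fun t => ?_
        by_cases h : r s₀ t <;> simp [h, hright t]
    _ = ∑' t : {t // r s₀ t}, ν t := by
        rw [show (∑' t : {t // r s₀ t}, ν t) = ∑' x : ({t | r s₀ t} : Set S), ν x from rfl,
          tsum_subtype {t | r s₀ t} (fun t => ν t)]
        exact tsum_congr fun t => by simp [Set.indicator_apply]
end

section
/- Let S be a finite set and let ω^1, ..., ω^{n-1} ∈ Distr(S × S) be couplings where ω^p has left marginal τ(s_p) and right marginal τ(s_{p+1}). Let R̄ be the reflexive-symmetric-transitive closure of ⋃_p support(ω^p), with equivalence classes S_1, ..., S_k. Then τ(s_p)(S_j) = τ(s_{p+1})(S_j) for all 1 ≤ p < n and 1 ≤ j ≤ k; in particular all the τ(s_p) assign the same probability to each class S_j. -/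
open scoped Classical

/-- Couplings between consecutive distributions in a chain: each distribution
assigns equal mass to each equivalence class of the equivalence relation
generated by the union of the supports. -/
theorem stmt6 {S : Type*} [Fintype S] (n : ℕ)
    (τ : Fin (n + 1) → S → ℝ) (ω : Fin n → S × S → ℝ)
    (hnn : ∀ p q, 0 ≤ ω p q)
    (hleft : ∀ p : Fin n, ∀ u, ∑ v, ω p (u, v) = τ p.castSucc u)
    (hright : ∀ p : Fin n, ∀ v, ∑ u, ω p (u, v) = τ p.succ v) :
    ∀ p : Fin n, ∀ u₀ : S,
      (∑ v ∈ Finset.univ.filter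
          (fun v => Relation.EqvGen (fun u v => ∃ q, ω q (u, v) ≠ 0) u₀ v),
        τ p.castSucc v)
      = ∑ v ∈ Finset.univ.filter
          (fun v => Relation.EqvGen (fun u v => ∃ q, ω q (u, v) ≠ 0) u₀ v),
        τ p.succ v := by
  intro p u₀
  set R : S → S → Prop := fun u v => ∃ q, ω q (u, v) ≠ 0 with hR
  set E := Relation.EqvGen R
  set C := Finset.univ.filter (fun v => E u₀ v) with hC
  have memC : ∀ v, v ∈ C ↔ E u₀ v := by
    intro v; simp [hC]
  have key : ∀ u v, ω p (u, v) ≠ 0 → (E u₀ u ↔ E u₀ v) := by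
    intro u v h
    have huv : E u₀ u → E u₀ v := fun h' =>
      Relation.EqvGen.trans _ _ _ h' (Relation.EqvGen.rel _ _ ⟨p, h⟩)
    have hvu : E u₀ v → E u₀ u := fun h' =>
      Relation.EqvGen.trans _ _ _ h'
        (Relation.EqvGen.symm _ _ (Relation.EqvGen.rel _ _ ⟨p, h⟩))
    exact ⟨huv, hvu⟩
  have hL : (∑ u ∈ C, τ p.castSucc u) = ∑ u ∈ C, ∑ v ∈ C, ω p (u, v) := by
    refine Finset.sum_congr rfl fun u hu => ?_
    rw [← hleft p u]
    rw [← Finset.sum_filter_add_sum_filter_not Finset.univ (fun v => E u₀ v)]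
    have : (∑ v ∈ Finset.univ.filter (fun v => ¬ E u₀ v), ω p (u, v)) = 0 := by
      refine Finset.sum_eq_zero fun v hv => ?_
      by_contra h
      have := (key u v h).1 ((memC u).1 hu)
      simp [Finset.mem_filter] at hv
      exact hv this
    rw [this, add_zero]
  have hRt : (∑ v ∈ C, τ p.succ v) = ∑ v ∈ C, ∑ u ∈ C, ω p (u, v) := by
    refine Finset.sum_congr rfl fun v hv => ?_
    rw [← hright p v]
    rw [← Finset.sum_filter_add_sum_filter_not Finset.univ (fun u => E u₀ u)]
    have : (∑ u ∈ Finset.univ.filter (fun u => ¬ E u₀ u), ω p (u, v)) = 0 := by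
      refine Finset.sum_eq_zero fun u hu => ?_
      by_contra h
      have := (key u v h).2 ((memC v).1 hv)
      simp [Finset.mem_filter] at hu
      exact hu this
    rw [this, add_zero]
  calc (∑ u ∈ C, τ p.castSucc u) = ∑ u ∈ C, ∑ v ∈ C, ω p (u, v) := hL
    _ = ∑ v ∈ C, ∑ u ∈ C, ω p (u, v) := Finset.sum_comm
    _ = ∑ v ∈ C, τ p.succ v := hRt.symm
end

section
/- Consider the labelled Markov chain with states {s_0, s_1, s_2, ...} ∪ {t}, where s_0 and t are absorbing (transition to themselves with probability 1), and for i ≥ 1, s_i transitions to s_{i-1} with probability 1/3 and to s_{i+1} with probability 2/3; all states carry the same label except s_0, which differs. Then the probabilistic bisimilarity distance satisfies d(s_i, t) = 1/2^i for all i ≥ 0. -/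
/-- For the LMC with absorbing states `s₀, t`, where `s_i` moves to `s_{i-1}`
with probability 1/3 and `s_{i+1}` with probability 2/3, and only `s₀` has a
different label: the bisimilarity distance `d i = d(s_i, t)`, characterised as
the least fixed point in `[0,1]` of the distance operator (which here reduces
to `d 0 = 1` and `d (i+1) = 1/3 · d i + 2/3 · d (i+2)`), equals `(1/2)^i`. -/
theorem stmt7 (d : ℕ → ℝ)
    (hnn : ∀ i, 0 ≤ d i) (hle : ∀ i, d i ≤ 1)
    (hfix : d 0 = 1 ∧ ∀ i, d (i + 1) = 1/3 * d i + 2/3 * d (i + 2))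
    (hleast : ∀ e : ℕ → ℝ, (∀ i, 0 ≤ e i) → (∀ i, e i ≤ 1) →
      (e 0 = 1 ∧ ∀ i, e (i + 1) = 1/3 * e i + 2/3 * e (i + 2)) →
      ∀ i, d i ≤ e i) :
    ∀ i, d i = (1/2 : ℝ) ^ i := by
  obtain ⟨h0, hrec⟩ := hfix
  -- upper bound
  have hub : ∀ i, d i ≤ (1/2 : ℝ) ^ i := by
    apply hleast
    · intro i; positivity
    · intro i; exact pow_le_one₀ (by norm_num) (by norm_num)
    · refine ⟨by norm_num, fun i => ?_⟩
      have : ((1:ℝ)/2)^(i+1) = (1/2)^i * (1/2) := pow_succ _ _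
      have h2 : ((1:ℝ)/2)^(i+2) = (1/2)^i * (1/4) := by
        rw [pow_add]; ring
      rw [this, h2]; ring
  -- closed form d i = A + B (1/2)^i
  set A : ℝ := 2 * d 1 - 1 with hA
  set B : ℝ := 2 - 2 * d 1 with hB
  have hclosed : ∀ i, d i = A + B * (1/2:ℝ)^i := by
    have key : ∀ i, d i = A + B * (1/2:ℝ)^i ∧ d (i+1) = A + B * (1/2:ℝ)^(i+1) := by
      intro i
      induction i with
      | zero => constructor <;> simp [h0, hA, hB] <;> ring
      | succ n ih =>
        refine ⟨ih.2, ?_⟩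
        have h := hrec n
        have hd2 : d (n+2) = 3/2 * d (n+1) - 1/2 * d n := by linarith
        rw [show n+1+1 = n+2 from rfl, hd2, ih.1, ih.2,
          show n+2 = n+1+1 from rfl, pow_succ, pow_succ]
        ring
    exact fun i => (key i).1
  -- A ≥ 0
  have hAnn : 0 ≤ A := by
    by_contra h
    push_neg at h
    obtain ⟨n, hn⟩ := pow_unbounded_of_one_lt (B / (-A)) (by norm_num : (1:ℝ) < 2)
    have h2n : (0:ℝ) < 2^n := by positivity
    have hBlt : B < -A * 2^n := by
      rw [div_lt_iff₀ (by linarith)] at hn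
      nlinarith
    have := hnn n
    rw [hclosed n] at this
    have hpow : ((1:ℝ)/2)^n = 1 / 2^n := by
      rw [div_pow]; norm_num
    rw [hpow] at this
    have : 0 ≤ A * 2^n + B := by
      have := mul_le_mul_of_nonneg_right this (le_of_lt h2n)
      rw [add_mul, mul_assoc, div_mul_cancel₀] at this
      · linarith
      · positivity
    nlinarith
  -- A ≤ 0
  have hAle : A ≤ 0 := by
    have := hub 1
    rw [hclosed 1] at this
    have hAB : A + B = 1 := by rw [hA, hB]; ring
    nlinarith
  have hA0 : A = 0 := le_antisymm hAle hAnn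
  have hB1 : B = 1 := by
    have hAB : A + B = 1 := by rw [hA, hB]; ring
    linarith
  intro i
  rw [hclosed i, hA0, hB1]; ring
end

section
/- Let S be a countable set, L a finite label set, and (S, L, τ, ℓ) a finitely branching labelled Markov chain. For a policy T assigning to each pair (s,t) with ℓ(s)=ℓ(t) and s not bisimilar to t a coupling T(s,t) ∈ Ω(τ(s),τ(t)), define Θ^T(e)(s,t) = 0 if s ∼ t, 1 if ℓ(s) ≠ ℓ(t), and ∑_{u,v} T(s,t)(u,v) e(u,v) otherwise. Then the probabilistic bisimilarity distance d satisfies d ⊑ μ.Θ^T (pointwise), i.e., the least fixed point of Θ^T is an upper bound on d, for every policy T. -/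
open scoped ENNReal Classical

/-- `ω` is a coupling of `μ` and `ν`. -/
def IsCoupling {S : Type*} (μ ν : S → ℝ≥0∞) (ω : S × S → ℝ≥0∞) : Prop :=
  (∀ s, (∑' t, ω (s, t)) = μ s) ∧ (∀ t, (∑' s, ω (s, t)) = ν t)

/-- `r` is a probabilistic bisimulation on the LMC with transitions `τ` and labels `ℓ`. -/
def IsBisimulation {S L : Type*} (τ : S → S → ℝ≥0∞) (ℓ : S → L) (r : S → S → Prop) : Prop :=
  Equivalence r ∧ ∀ s t, r s t → ℓ s = ℓ t ∧
    ∀ u, (∑' v : {v // r u v}, τ s v) = (∑' v : {v // r u v}, τ t v)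

/-- Probabilistic bisimilarity: the largest probabilistic bisimulation. -/
def Bisim {S L : Type*} (τ : S → S → ℝ≥0∞) (ℓ : S → L) (s t : S) : Prop :=
  ∃ r, IsBisimulation τ ℓ r ∧ r s t

/-- The distance operator `Δ`. -/
noncomputable def Delta {S L : Type*} (τ : S → S → ℝ≥0∞) (ℓ : S → L)
    (e : S → S → ℝ≥0∞) (s t : S) : ℝ≥0∞ :=
  if ℓ s ≠ ℓ t then 1
  else ⨅ ω ∈ {ω | IsCoupling (τ s) (τ t) ω}, ∑' p : S × S, ω p * e p.1 p.2

/-- A policy: a coupling for every same-labelled, non-bisimilar pair. -/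
def IsPolicy {S L : Type*} (τ : S → S → ℝ≥0∞) (ℓ : S → L)
    (T : S → S → S × S → ℝ≥0∞) : Prop :=
  ∀ s t, ℓ s = ℓ t → ¬ Bisim τ ℓ s t → IsCoupling (τ s) (τ t) (T s t)

/-- The operator `Θ^T` induced by a policy `T`. -/
noncomputable def Theta {S L : Type*} (τ : S → S → ℝ≥0∞) (ℓ : S → L)
    (T : S → S → S × S → ℝ≥0∞) (e : S → S → ℝ≥0∞) (s t : S) : ℝ≥0∞ :=
  if Bisim τ ℓ s t then 0
  else if ℓ s ≠ ℓ t then 1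
  else ∑' p : S × S, T s t p * e p.1 p.2

/-- `x` is the least (pre-)fixed point of `f`. -/
def IsLfp {α : Type*} [Preorder α] (f : α → α) (x : α) : Prop :=
  f x ≤ x ∧ ∀ y, f y ≤ y → x ≤ y

/-
The distance `d` is the least pre-fixed point of `Δ`, so it suffices to check `Δ θ ≤ θ`.
Off bisimilar pairs `Δ θ` is bounded by `Θ^T θ`, because the policy supplies an admissible coupling.
On a bisimilar pair, `θ` vanishes (the least fixed point of `Θ^T` is zero wherever `Θ^T` is
constantly zero), and the two successor distributions agree on every bisimulation class, so they
admit a coupling supported on the bisimulation, against which `θ` integrates to zero.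
-/

section Coupling

variable {S : Type*}

noncomputable def classMass (μ : S → ℝ≥0∞) (r : S → S → Prop) (u : S) : ℝ≥0∞ :=
  ∑' v : {v // r u v}, μ v

theorem classMass_eq_tsum_ite (μ : S → ℝ≥0∞) (r : S → S → Prop) (u : S) :
    classMass μ r u = ∑' v, if r u v then μ v else 0 := by
  rw [classMass, show (∑' v : {v // r u v}, μ v) = ∑' v : {v | r u v}, μ v from rfl, tsum_subtype]
  exact tsum_congr fun v => by simp [Set.indicator_apply]

theorem le_classMass (μ : S → ℝ≥0∞) {r : S → S → Prop} {u v : S} (h : r u v) :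
    μ v ≤ classMass μ r u :=
  ENNReal.le_tsum (⟨v, h⟩ : {v // r u v})

theorem classMass_le_tsum (μ : S → ℝ≥0∞) (r : S → S → Prop) (u : S) :
    classMass μ r u ≤ ∑' v, μ v :=
  ENNReal.tsum_comp_le_tsum_of_injective Subtype.val_injective _

theorem Equivalence.classMass_eq {μ : S → ℝ≥0∞} {r : S → S → Prop} (hr : Equivalence r)
    {u v : S} (h : r u v) : classMass μ r u = classMass μ r v := by
  simp only [classMass_eq_tsum_ite]
  refine tsum_congr fun w => ?_
  simp only [eq_iff_iff.mpr ⟨hr.trans (hr.symm h), hr.trans h⟩]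

/-- The witness is `ω (u, v) = μ u * ν v / classMass μ r u` on pairs in a common class; where
that class mass is zero, both marginals vanish on the whole class. -/
theorem Equivalence.exists_coupling_of_classMass_eq {μ ν : S → ℝ≥0∞} {r : S → S → Prop}
    (hr : Equivalence r) (hfin : ∀ u, classMass μ r u ≠ ⊤)
    (heq : ∀ u, classMass μ r u = classMass ν r u) :
    ∃ ω, IsCoupling μ ν ω ∧ ∀ p, r p.1 p.2 ∨ ω p = 0 := by
  have hμ (u : S) : μ u / classMass μ r u * classMass μ r u = μ u :=
    ENNReal.div_mul_cancel' (fun h => le_antisymm (h ▸ le_classMass μ (hr.refl u)) bot_le)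
      (fun h => absurd h (hfin u))
  have hν (v : S) : ν v / classMass μ r v * classMass μ r v = ν v := by
    refine ENNReal.div_mul_cancel' (fun h => ?_) (fun h => absurd h (hfin v))
    rw [heq] at h
    exact le_antisymm (h ▸ le_classMass ν (hr.refl v)) bot_le
  refine ⟨fun p => if r p.1 p.2 then μ p.1 * ν p.2 / classMass μ r p.1 else 0,
    ⟨fun u => ?_, fun v => ?_⟩, fun p => ?_⟩
  · calc (∑' v, if r u v then μ u * ν v / classMass μ r u else 0)
        = ∑' v, μ u / classMass μ r u * if r u v then ν v else 0 := by
          refine tsum_congr fun v => ?_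
          split_ifs <;> simp only [div_eq_mul_inv, mul_zero]; ring
      _ = μ u := by rw [ENNReal.tsum_mul_left, ← classMass_eq_tsum_ite, ← heq, hμ]
  · calc (∑' u, if r u v then μ u * ν v / classMass μ r u else 0)
        = ∑' u, ν v / classMass μ r v * if r v u then μ u else 0 := by
          refine tsum_congr fun u => ?_
          by_cases h : r u v
          · rw [if_pos h, if_pos (hr.symm h), hr.classMass_eq h, div_eq_mul_inv, div_eq_mul_inv]
            ring
          · rw [if_neg h, if_neg (fun h' => h (hr.symm h')), mul_zero]
      _ = ν v := by rw [ENNReal.tsum_mul_left, ← classMass_eq_tsum_ite, hν]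
  · by_cases h : r p.1 p.2
    · exact Or.inl h
    · exact Or.inr (if_neg h)

end Coupling

section Bisimilarity

variable {S L : Type*} {τ : S → S → ℝ≥0∞} {ℓ : S → L}

theorem Bisim.label_eq {s t : S} (h : Bisim τ ℓ s t) : ℓ s = ℓ t := by
  obtain ⟨_, hr, hst⟩ := h
  exact (hr.2 s t hst).1

theorem Bisim.exists_coupling (hdistr : ∀ s, (∑' t, τ s t) = 1) {s t : S}
    (h : Bisim τ ℓ s t) :
    ∃ ω, IsCoupling (τ s) (τ t) ω ∧ ∀ p, Bisim τ ℓ p.1 p.2 ∨ ω p = 0 := by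
  obtain ⟨r, hr, hst⟩ := h
  have hfin (u : S) : classMass (τ s) r u ≠ ⊤ :=
    ne_top_of_le_ne_top ENNReal.one_ne_top (hdistr s ▸ classMass_le_tsum _ r u)
  obtain ⟨ω, hω, hsupp⟩ := hr.1.exists_coupling_of_classMass_eq hfin (hr.2 s t hst).2
  exact ⟨ω, hω, fun p => (hsupp p).imp_left fun h => ⟨r, hr, h⟩⟩

theorem Delta_le_of_isCoupling (e : S → S → ℝ≥0∞) {s t : S} (hl : ℓ s = ℓ t)
    {ω : S × S → ℝ≥0∞} (hω : IsCoupling (τ s) (τ t) ω) :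
    Delta τ ℓ e s t ≤ ∑' p : S × S, ω p * e p.1 p.2 := by
  rw [Delta, if_neg (not_not.mpr hl)]
  exact iInf₂_le ω hω

variable {T : S → S → S × S → ℝ≥0∞}

theorem Theta_mono : Monotone (Theta τ ℓ T) := by
  intro e e' he s t
  simp only [Theta]
  split_ifs
  exacts [le_rfl, le_rfl, ENNReal.tsum_le_tsum fun p => mul_le_mul_right (he _ _) _]

theorem Theta_of_not_bisim (e : S → S → ℝ≥0∞) {s t : S} (hb : ¬ Bisim τ ℓ s t)
    (hl : ℓ s = ℓ t) : Theta τ ℓ T e s t = ∑' p : S × S, T s t p * e p.1 p.2 := by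
  rw [Theta, if_neg hb, if_neg (not_not.mpr hl)]

/-- Erasing `θ` on bisimilar pairs gives another pre-fixed point of `Θ^T`, since `Θ^T` is
monotone and already zero there. -/
theorem IsLfp.eq_zero_of_bisim {θ : S → S → ℝ≥0∞} (hθ : IsLfp (Theta τ ℓ T) θ)
    {s t : S} (h : Bisim τ ℓ s t) : θ s t = 0 := by
  let θ' : S → S → ℝ≥0∞ := fun a b => if Bisim τ ℓ a b then 0 else θ a b
  have hθ'θ : θ' ≤ θ := fun a b => by
    by_cases hb : Bisim τ ℓ a b <;> simp [θ', hb]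
  have hpre : Theta τ ℓ T θ' ≤ θ' := fun a b => by
    by_cases hb : Bisim τ ℓ a b
    · simp [Theta, θ', hb]
    · simpa [θ', hb] using (Theta_mono hθ'θ).trans hθ.1 a b
  simpa [θ', h] using hθ.2 θ' hpre s t

end Bisimilarity

theorem stmt9_general {S L : Type*}
    (τ : S → S → ℝ≥0∞) (ℓ : S → L)
    (hdistr : ∀ s, (∑' t, τ s t) = 1)
    (d : S → S → ℝ≥0∞) (hd : IsLfp (Delta τ ℓ) d)
    (T : S → S → S × S → ℝ≥0∞) (hT : IsPolicy τ ℓ T)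
    (θ : S → S → ℝ≥0∞) (hθ : IsLfp (Theta τ ℓ T) θ) :
    d ≤ θ := by
  refine hd.2 θ fun s t => ?_
  by_cases hl : ℓ s = ℓ t
  swap
  · have hb : ¬ Bisim τ ℓ s t := fun h => hl h.label_eq
    simpa [Delta, Theta, hl, hb] using hθ.1 s t
  by_cases hb : Bisim τ ℓ s t
  · obtain ⟨ω, hω, hsupp⟩ := hb.exists_coupling hdistr
    have hvanish : ∑' p : S × S, ω p * θ p.1 p.2 = 0 := ENNReal.tsum_eq_zero.mpr fun p =>
      (hsupp p).elim (fun h => by rw [hθ.eq_zero_of_bisim h, mul_zero])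
        (fun h => by rw [h, zero_mul])
    exact (Delta_le_of_isCoupling θ hl hω).trans (hvanish ▸ bot_le)
  · calc Delta τ ℓ θ s t ≤ ∑' p : S × S, T s t p * θ p.1 p.2 :=
          Delta_le_of_isCoupling θ hl (hT s t hl hb)
      _ = Theta τ ℓ T θ s t := (Theta_of_not_bisim θ hb hl).symm
      _ ≤ θ s t := hθ.1 s t

/-- For every policy `T`, the least fixed point of `Θ^T` dominates the
probabilistic bisimilarity distance `d` (the least fixed point of `Δ`). -/
theorem stmt9 {S L : Type*} [Countable S] [Finite L]
    (τ : S → S → ℝ≥0∞) (ℓ : S → L)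
    (hdistr : ∀ s, (∑' t, τ s t) = 1)
    (hfin : ∀ s, {t | τ s t ≠ 0}.Finite)
    (d : S → S → ℝ≥0∞) (hd : IsLfp (Delta τ ℓ) d)
    (T : S → S → S × S → ℝ≥0∞) (hT : IsPolicy τ ℓ T)
    (θ : S → S → ℝ≥0∞) (hθ : IsLfp (Theta τ ℓ T) θ) :
    d ≤ θ :=
  stmt9_general τ ℓ hdistr d hd T hT θ hθ
end

section
/- Let (S, L, τ, ℓ) be a finitely branching labelled Markov chain over a countable state space, and suppose for each pair (s,t) with equal labels and s ≁ t a coupling T(s,t) is chosen achieving the minimum in Δ(d)(s,t) = min_{ω ∈ Ω(τ(s),τ(t))} ∑ ω(u,v) d(u,v). Then d is a fixed point of the resulting operator Θ^T, and hence μ.Θ^T ⊑ d. -/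
open scoped ENNReal Classical

section Aux

open scoped ENNReal Classical

variable {S L : Type*} {τ : S → S → ℝ≥0∞} {ℓ : S → L}

theorem delta_mono {e e' : S → S → ℝ≥0∞} (h : ∀ u v, e u v ≤ e' u v) :
    ∀ s t, Delta τ ℓ e s t ≤ Delta τ ℓ e' s t := by
  intro s t
  unfold Delta
  split_ifs with hl
  · exact le_rfl
  · refine iInf_mono fun ω => iInf_mono fun _ => ?_
    exact ENNReal.tsum_le_tsum fun p => mul_le_mul_right (h p.1 p.2) _

/-- On bisimilar pairs, the least prefixed point of `Delta` vanishes. -/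
theorem bisim_d_zero (hdistr : ∀ s, (∑' t, τ s t) = 1)
    {d : S → S → ℝ≥0∞} (hd : IsLfp (Delta τ ℓ) d)
    {s t : S} (hB : Bisim τ ℓ s t) : d s t = 0 := by
  classical
  set e : S → S → ℝ≥0∞ := fun u v => if Bisim τ ℓ u v then 0 else d u v with he
  have hele : ∀ u v, e u v ≤ d u v := by
    intro u v; simp only [he]; split_ifs <;> simp
  have hpre : ∀ u v, Delta τ ℓ e u v ≤ e u v := by
    intro u v
    by_cases hB' : Bisim τ ℓ u v
    · -- construct a coupling supported on a bisimulation
      obtain ⟨r, hr, hruv⟩ := hB'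
      have hl : ℓ u = ℓ v := (hr.2 u v hruv).1
      set m : S → ℝ≥0∞ := fun w => ∑' x : {x // r w x}, τ u x with hm
      have hmt : ∀ w, m w = ∑' x : {x // r w x}, τ v x := fun w => (hr.2 u v hruv).2 w
      have hms : ∀ w, m w = ∑' x : {x | r w x}, τ u x := fun w => rfl
      have hm_ne_top : ∀ w, m w ≠ ∞ := by
        intro w
        have h1 : m w ≤ ∑' x, τ u x :=
          le_trans (le_of_eq (tsum_subtype {x | r w x} (τ u)))
            (ENNReal.tsum_le_tsum fun x => Set.indicator_le_self _ _ x)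
        rw [hdistr u] at h1
        exact ne_top_of_le_ne_top ENNReal.one_ne_top h1
      have hle_m : ∀ w, τ u w ≤ m w := fun w =>
        ENNReal.le_tsum (⟨w, hr.1.refl w⟩ : {x // r w x})
      have hle_mt : ∀ w, τ v w ≤ m w := fun w => by
        rw [hmt w]; exact ENNReal.le_tsum (⟨w, hr.1.refl w⟩ : {x // r w x})
      have hclass : ∀ w x, r w x → m w = m x := by
        intro w x hwx
        have hset : {y | r w y} = {y | r x y} := by
          ext y
          exact ⟨fun h => hr.1.trans (hr.1.symm hwx) h, fun h => hr.1.trans hwx h⟩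
        calc m w = ∑' y, Set.indicator {y | r w y} (τ u) y := tsum_subtype _ _
          _ = ∑' y, Set.indicator {y | r x y} (τ u) y := by rw [hset]
          _ = m x := (tsum_subtype _ _).symm
      set ω : S × S → ℝ≥0∞ := fun p => if r p.1 p.2 then τ u p.1 * τ v p.2 / m p.1 else 0
        with hw
      have hcoup : IsCoupling (τ u) (τ v) ω := by
        constructor
        · intro w
          have hterm : ∀ x, ω (w, x) =
              Set.indicator {x | r w x} (fun x => τ u w / m w * τ v x) x := by
            intro x
            simp only [hw, Set.indicator, Set.mem_setOf_eq]
            split_ifs with h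
            · rw [div_eq_mul_inv, div_eq_mul_inv, mul_right_comm]
            · rfl
          rw [tsum_congr hterm, ← tsum_subtype {x | r w x} (fun x => τ u w / m w * τ v x),
            ENNReal.tsum_mul_left]
          have hsum : (∑' x : {x | r w x}, τ v x) = m w := (hmt w).symm
          rw [hsum]
          rcases eq_or_ne (m w) 0 with h0 | h0
          · have hτ : τ u w = 0 := by simpa [h0] using hle_m w
            simp [h0, hτ]
          · exact ENNReal.div_mul_cancel h0 (hm_ne_top w)
        · intro x
          have hterm : ∀ w, ω (w, x) =
              Set.indicator {w | r x w} (fun w => τ v x / m x * τ u w) w := by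
            intro w
            simp only [hw, Set.indicator, Set.mem_setOf_eq]
            split_ifs with h h' h'
            · rw [hclass w x h, div_eq_mul_inv, div_eq_mul_inv, mul_comm (τ u w) (τ v x),
                mul_right_comm]
            · exact absurd (hr.1.symm h) h'
            · exact absurd (hr.1.symm h') h
            · rfl
          rw [tsum_congr hterm, ← tsum_subtype {w | r x w} (fun w => τ v x / m x * τ u w),
            ENNReal.tsum_mul_left]
          have hsum : (∑' w : {w | r x w}, τ u w) = m x := rfl
          rw [hsum]
          rcases eq_or_ne (m x) 0 with h0 | h0
          · have hτ : τ v x = 0 := by simpa [h0] using hle_mt x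
            simp [h0, hτ]
          · exact ENNReal.div_mul_cancel h0 (hm_ne_top x)
      have hzero : (∑' p : S × S, ω p * e p.1 p.2) = 0 := by
        rw [ENNReal.tsum_eq_zero]
        intro p
        by_cases h : r p.1 p.2
        · have h1 : e p.1 p.2 = 0 := by simp only [he]; rw [if_pos ⟨r, hr, h⟩]
          rw [h1, mul_zero]
        · have h1 : ω p = 0 := by simp only [hw]; rw [if_neg h]
          rw [h1, zero_mul]
      have hle0 : Delta τ ℓ e u v ≤ 0 := by
        unfold Delta
        rw [if_neg (by simp [hl])]
        calc ⨅ ω' ∈ {ω' | IsCoupling (τ u) (τ v) ω'}, ∑' p : S × S, ω' p * e p.1 p.2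
            ≤ ∑' p : S × S, ω p * e p.1 p.2 := iInf₂_le ω hcoup
          _ = 0 := hzero
      have he0 : e u v = 0 := by simp only [he]; rw [if_pos ⟨r, hr, hruv⟩]
      rw [he0]
      exact hle0
    · have he' : e u v = d u v := by simp only [he]; rw [if_neg hB']
      rw [he']
      exact (delta_mono hele u v).trans (hd.1 u v)
  have hde : d ≤ e := hd.2 e fun u v => hpre u v
  have h1 : d s t ≤ e s t := hde s t
  have h2 : e s t = 0 := by simp only [he]; rw [if_pos hB]
  simpa [h2] using h1

end Aux

/-- If `T` is chosen so that `T s t` achieves the minimum in `Δ(d)(s,t)` for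
every same-labelled non-bisimilar pair, then `d` is a fixed point of `Θ^T`,
and hence the least fixed point of `Θ^T` is bounded above by `d`. -/
theorem stmt10 {S L : Type*} [Countable S] [Finite L]
    (τ : S → S → ℝ≥0∞) (ℓ : S → L)
    (hdistr : ∀ s, (∑' t, τ s t) = 1)
    (hfin : ∀ s, {t | τ s t ≠ 0}.Finite)
    (d : S → S → ℝ≥0∞) (hd : IsLfp (Delta τ ℓ) d)
    (T : S → S → S × S → ℝ≥0∞)
    (hT : ∀ s t, ℓ s = ℓ t → ¬ Bisim τ ℓ s t →
      IsCoupling (τ s) (τ t) (T s t) ∧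
        (∑' p : S × S, T s t p * d p.1 p.2) = Delta τ ℓ d s t) :
    Theta τ ℓ T d = d ∧ ∀ θ : S → S → ℝ≥0∞, IsLfp (Theta τ ℓ T) θ → θ ≤ d := by
  have hfix : Delta τ ℓ d = d := by
    refine le_antisymm hd.1 (hd.2 _ ?_)
    exact fun s t => delta_mono (fun u v => hd.1 u v) s t
  have hmain : Theta τ ℓ T d = d := by
    funext s t
    unfold Theta
    split_ifs with hB hl
    · exact (bisim_d_zero hdistr hd hB).symm
    · have h1 : Delta τ ℓ d s t = 1 := by unfold Delta; rw [if_pos hl]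
      calc (1 : ℝ≥0∞) = Delta τ ℓ d s t := h1.symm
        _ = d s t := by rw [hfix]
    · push_neg at hl
      rw [(hT s t hl hB).2, hfix]
  refine ⟨hmain, fun θ hθ => hθ.2 d ?_⟩
  rw [hmain]
end
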